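/- Let 1 ≤ k ≤ n-1. For distinct indices i_1, …, i_k in {1, …, n}, let W_s(i_1, …, i_k) denote the s-th largest of the n-k values P(A_{i_1} ∩ ⋯ ∩ A_{i_k} ∩ A_j) for j ∉ {i_1, …, i_k}, for s = 1, …, n-k. Then E[C(X-1, k)] ≥ Σ_{1 ≤ i_1 < ⋯ < i_k ≤ n} Σ_{s=1}^{n-k} W_s(i_1, …, i_k) · k/((k+s)(k+s-1)). -/

import Mathlib

open MeasureTheory Finset
open scoped Classical

/-- The `s`-th largest element of a multiset of reals (`s = 1` giving the
largest), defined as the element at position `card - s` of the ascending sort,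
with default value `0`. -/
noncomputable def nthLargest (m : Multiset ℝ) (s : ℕ) : ℝ :=
  (m.sort (· ≤ ·)).getD (Multiset.card m - s) 0

lemma telescope_sum (k : ℕ) (hk : 1 ≤ k) (Y : ℕ) :
    ∑ s ∈ Icc 1 Y, (k : ℝ) / (((k : ℝ) + s) * ((k : ℝ) + s - 1)) = (Y : ℝ) / ((k : ℝ) + Y) := by
  induction Y with
  | zero => simp
  | succ Y ih =>
    rw [Finset.sum_Icc_succ_top (by omega), ih]
    have hk1 : (1 : ℝ) ≤ (k : ℝ) := by exact_mod_cast hk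
    have h1 : (0 : ℝ) < (k : ℝ) + Y := by positivity
    have h2 : (0 : ℝ) < (k : ℝ) + (Y + 1 : ℕ) := by positivity
    push_cast
    have h3 : (k : ℝ) + (Y + 1) - 1 = (k : ℝ) + Y := by ring
    rw [h3]
    field_simp
    ring

lemma abel_nonneg : ∀ (m : ℕ) (c x : ℕ → ℝ),
    (∀ s ∈ Icc 1 m, 0 ≤ c s) →
    (∀ s ∈ Icc 1 m, ∀ t ∈ Icc 1 m, s ≤ t → c t ≤ c s) →
    (∀ t ∈ Icc 1 m, 0 ≤ ∑ s ∈ Icc 1 t, x s) →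
    0 ≤ ∑ s ∈ Icc 1 m, c s * x s := by
  intro m
  induction m with
  | zero => intro c x _ _ _; simp
  | succ m ih =>
    intro c x hc hmono hpart
    have expand : ∑ s ∈ Icc 1 m, (c s - c (m + 1)) * x s
        = ∑ s ∈ Icc 1 m, c s * x s - c (m + 1) * ∑ s ∈ Icc 1 m, x s := by
      rw [Finset.mul_sum, ← Finset.sum_sub_distrib]
      exact Finset.sum_congr rfl fun s _ => by ring
    have key : ∑ s ∈ Icc 1 (m + 1), c s * x s
        = (∑ s ∈ Icc 1 m, (c s - c (m + 1)) * x s) + c (m + 1) * ∑ s ∈ Icc 1 (m + 1), x s := by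
      rw [Finset.sum_Icc_succ_top (by omega : 1 ≤ m + 1),
        Finset.sum_Icc_succ_top (by omega : 1 ≤ m + 1), expand]
      ring
    rw [key]
    have h1 : 0 ≤ ∑ s ∈ Icc 1 m, (c s - c (m + 1)) * x s := by
      apply ih
      · intro s hs
        simp only [mem_Icc] at hs
        have := hmono s (mem_Icc.mpr (by omega)) (m + 1) (mem_Icc.mpr (by omega)) (by omega)
        linarith
      · intro s hs t ht hst
        simp only [mem_Icc] at hs ht
        have := hmono s (mem_Icc.mpr (by omega)) t (mem_Icc.mpr (by omega)) hst
        linarith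
      · intro t ht
        simp only [mem_Icc] at ht
        exact hpart t (mem_Icc.mpr (by omega))
    have h2 : 0 ≤ c (m + 1) * ∑ s ∈ Icc 1 (m + 1), x s :=
      mul_nonneg (hc (m + 1) (mem_Icc.mpr (by omega))) (hpart (m + 1) (mem_Icc.mpr (by omega)))
    linarith

lemma sum_nthLargest (m : Multiset ℝ) :
    ∀ (t : ℕ), t ≤ Multiset.card m →
    ∑ s ∈ Icc 1 t, nthLargest m s = ((m.sort (· ≤ ·)).drop (Multiset.card m - t)).sum := by
  intro t
  induction t with
  | zero =>
    intro _
    have hnil : (m.sort (· ≤ ·)).drop (Multiset.card m) = [] :=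
      List.drop_eq_nil_of_le (by rw [Multiset.length_sort])
    simp [hnil]
  | succ t ih =>
    intro ht
    have hlen : (m.sort (· ≤ ·)).length = Multiset.card m := Multiset.length_sort _
    have hi : Multiset.card m - (t + 1) < (m.sort (· ≤ ·)).length := by omega
    rw [Finset.sum_Icc_succ_top (by omega : 1 ≤ t + 1), ih (by omega)]
    have hdrop : (m.sort (· ≤ ·)).drop (Multiset.card m - (t + 1))
        = (m.sort (· ≤ ·))[Multiset.card m - (t + 1)] ::
          (m.sort (· ≤ ·)).drop (Multiset.card m - (t + 1) + 1) := List.drop_eq_getElem_cons hi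
    have h1 : Multiset.card m - (t + 1) + 1 = Multiset.card m - t := by omega
    rw [h1] at hdrop
    rw [hdrop, List.sum_cons, nthLargest, List.getD_eq_getElem _ _ hi]
    ring

lemma exists_of_le_map {α β : Type*} [DecidableEq α] [DecidableEq β] {f : α → β} :
    ∀ {u : Multiset β} {s : Multiset α}, u ≤ s.map f → ∃ v, v ≤ s ∧ v.map f = u := by
  intro u
  induction u using Multiset.induction_on with
  | empty => intro s _; exact ⟨0, Multiset.zero_le _, rfl⟩
  | cons b u ih =>
    intro s h
    have hb : b ∈ s.map f := Multiset.mem_of_le h (Multiset.mem_cons_self _ _)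
    obtain ⟨a, ha, rfl⟩ := Multiset.mem_map.mp hb
    have h' : u ≤ (s.erase a).map f := by
      rw [Multiset.map_erase_of_mem f s ha]
      have := Multiset.erase_le_erase (f a) h
      rwa [Multiset.erase_cons_head] at this
    obtain ⟨v, hv, rfl⟩ := ih h'
    refine ⟨a ::ₘ v, ?_, by simp⟩
    rw [← Multiset.cons_erase ha]
    exact Multiset.cons_le_cons _ hv

lemma exists_subset_top_sum {α : Type*} [DecidableEq α] [Fintype α] (R : Finset α) (p : α → ℝ)
    (t : ℕ) (ht : t ≤ Rᶜ.card) :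
    ∃ T : Finset α, T ⊆ Rᶜ ∧ T.card = t ∧
      ∑ s ∈ Icc 1 t, nthLargest (Rᶜ.val.map p) s = ∑ j ∈ T, p j := by
  set m : Multiset ℝ := Rᶜ.val.map p with hm
  have hcard : Multiset.card m = Rᶜ.card := by simp [hm]
  set L : List ℝ := m.sort (· ≤ ·) with hL
  have hu : (↑(L.drop (Multiset.card m - t)) : Multiset ℝ) ≤ m := by
    calc (↑(L.drop (Multiset.card m - t)) : Multiset ℝ) ≤ (↑L : Multiset ℝ) :=
          Multiset.coe_le.mpr (List.drop_suffix _ _).sublist.subperm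
      _ = m := Multiset.sort_eq _ _
  obtain ⟨v, hv, hvm⟩ := exists_of_le_map (hu.trans_eq hm)
  have hnodup : v.Nodup := Multiset.nodup_of_le hv (Rᶜ.nodup)
  refine ⟨⟨v, hnodup⟩, ?_, ?_, ?_⟩
  · exact Finset.val_le_iff.mp hv
  · show Multiset.card v = t
    have : Multiset.card (v.map p) = Multiset.card v := Multiset.card_map _ _
    rw [← this, hvm]
    simp only [Multiset.coe_card, List.length_drop]
    rw [show L.length = Multiset.card m from Multiset.length_sort _]
    omega
  · rw [sum_nthLargest m t (by omega), Finset.sum_eq_multiset_sum]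
    show (L.drop (Multiset.card m - t)).sum = (v.map p).sum
    rw [hvm, Multiset.sum_coe]

noncomputable def cw (k s : ℕ) : ℝ := (k : ℝ) / (((k : ℝ) + s) * ((k : ℝ) + s - 1))

noncomputable def Ev {Ω : Type*} {n : ℕ} (A : Fin n → Set Ω) (R : Finset (Fin n)) (s : ℕ) :
    Set Ω :=
  {ω | R ⊆ Finset.univ.filter (fun l => ω ∈ A l) ∧ s ≤ (Rᶜ.filter (fun j => ω ∈ A j)).card}

lemma Ev_measurable {Ω : Type*} [MeasurableSpace Ω] {n : ℕ} (A : Fin n → Set Ω)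
    (hA : ∀ l, MeasurableSet (A l)) (R : Finset (Fin n)) (s : ℕ) :
    MeasurableSet (Ev A R s) := by
  classical
  have hEq : Ev A R s = ⋃ T ∈ powersetCard s Rᶜ, ((⋂ l ∈ R, A l) ∩ ⋂ j ∈ T, A j) := by
    ext ω
    simp only [Ev, Set.mem_setOf_eq, Set.mem_iUnion, Set.mem_inter_iff, Set.mem_iInter,
      mem_powersetCard]
    constructor
    · rintro ⟨h1, h2⟩
      obtain ⟨T, hTsub, hTcard⟩ := Finset.exists_subset_card_eq h2
      refine ⟨T, ⟨fun x hx => (Finset.mem_filter.mp (hTsub hx)).1, hTcard⟩,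
        fun l hl => ?_, fun j hj => (Finset.mem_filter.mp (hTsub hj)).2⟩
      have := h1 hl
      simp only [Finset.mem_filter] at this
      exact this.2
    · rintro ⟨T, ⟨hTsub, hTcard⟩, hB, hT⟩
      refine ⟨fun l hl => Finset.mem_filter.mpr ⟨Finset.mem_univ _, hB l hl⟩, ?_⟩
      rw [← hTcard]
      exact Finset.card_le_card fun j hj => Finset.mem_filter.mpr ⟨hTsub hj, hT j hj⟩
  rw [hEq]
  exact MeasurableSet.biUnion (Finset.countable_toSet _) fun T _ =>
    (MeasurableSet.biInter (Finset.countable_toSet _) fun l _ => hA l).inter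
      (MeasurableSet.biInter (Finset.countable_toSet _) fun j _ => hA j)

lemma pointwise_id {Ω : Type*} (n k : ℕ) (hk : 1 ≤ k)
    (A : Fin n → Set Ω) (ω : Ω) :
    ((((Finset.univ.filter (fun l => ω ∈ A l)).card - 1).choose k : ℕ) : ℝ)
      = ∑ R ∈ powersetCard k (Finset.univ : Finset (Fin n)), ∑ s ∈ Icc 1 (n - k),
          cw k s * Set.indicator (Ev A R s) (fun _ => (1 : ℝ)) ω := by
  classical
  set F := Finset.univ.filter (fun l => ω ∈ A l) with hF
  have hXn : F.card ≤ n := by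
    have := F.card_le_univ
    simpa using this
  have hinner : ∀ R ∈ powersetCard k (Finset.univ : Finset (Fin n)),
      ∑ s ∈ Icc 1 (n - k), cw k s * Set.indicator (Ev A R s) (fun _ => (1 : ℝ)) ω
        = if R ⊆ F then ((F.card - k : ℕ) : ℝ) / ((k : ℝ) + ((F.card - k : ℕ) : ℝ)) else 0 := by
    intro R hR
    rw [mem_powersetCard] at hR
    obtain ⟨-, hRk⟩ := hR
    by_cases hRF : R ⊆ F
    · have hfil : Rᶜ.filter (fun j => ω ∈ A j) = F \ R := by
        ext j
        simp only [Finset.mem_filter, Finset.mem_compl, Finset.mem_sdiff, hF,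
          Finset.mem_univ, true_and]
        tauto
      have hY : (Rᶜ.filter (fun j => ω ∈ A j)).card = F.card - k := by
        rw [hfil, Finset.card_sdiff_of_subset hRF, hRk]
      have hmem : ∀ s, ω ∈ Ev A R s ↔ s ≤ F.card - k := by
        intro s
        simp only [Ev, Set.mem_setOf_eq, ← hF, hY]
        exact ⟨fun h => h.2, fun h => ⟨hRF, h⟩⟩
      rw [if_pos hRF]
      calc ∑ s ∈ Icc 1 (n - k), cw k s * Set.indicator (Ev A R s) (fun _ => (1 : ℝ)) ω
          = ∑ s ∈ Icc 1 (n - k), if s ≤ F.card - k then cw k s else 0 := by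
            refine Finset.sum_congr rfl fun s _ => ?_
            rw [Set.indicator_apply]
            by_cases h : ω ∈ Ev A R s
            · rw [if_pos h, if_pos ((hmem s).mp h)]; ring
            · rw [if_neg h, if_neg (fun hh => h ((hmem s).mpr hh))]; ring
        _ = ∑ s ∈ (Icc 1 (n - k)).filter (· ≤ F.card - k), cw k s := (Finset.sum_filter _ _).symm
        _ = ∑ s ∈ Icc 1 (F.card - k), cw k s := by
            apply Finset.sum_congr _ fun s _ => rfl
            ext s
            simp only [Finset.mem_filter, mem_Icc]
            omega
        _ = ((F.card - k : ℕ) : ℝ) / ((k : ℝ) + ((F.card - k : ℕ) : ℝ)) := telescope_sum k hk _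
    · rw [if_neg hRF]
      refine Finset.sum_eq_zero fun s _ => ?_
      have hnot : ω ∉ Ev A R s := by
        intro h
        exact hRF (by rw [hF]; exact h.1)
      rw [Set.indicator_of_notMem hnot]
      ring
  rw [Finset.sum_congr rfl hinner]
  rw [← Finset.sum_filter]
  have hfil2 : (powersetCard k (Finset.univ : Finset (Fin n))).filter (fun R => R ⊆ F)
      = powersetCard k F := by
    ext R
    simp only [Finset.mem_filter, mem_powersetCard]
    exact ⟨fun h => ⟨h.2, h.1.2⟩, fun h => ⟨⟨Finset.subset_univ _, h.2⟩, h.1⟩⟩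
  rw [hfil2, Finset.sum_const, Finset.card_powersetCard, nsmul_eq_mul]
  rcases lt_or_ge F.card k with hXk | hkX
  · have h1 : F.card.choose k = 0 := Nat.choose_eq_zero_of_lt hXk
    have h2 : (F.card - 1).choose k = 0 := Nat.choose_eq_zero_of_lt (by omega)
    rw [h1, h2]
    simp
  · have hX1 : 1 ≤ F.card := le_trans hk hkX
    have hnat : F.card.choose k * (F.card - k) = (F.card - 1).choose k * F.card := by
      have h1 := Nat.choose_succ_right_eq F.card k
      have h2 := Nat.add_one_mul_choose_eq (F.card - 1) k
      rw [Nat.sub_add_cancel hX1] at h2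
      calc F.card.choose k * (F.card - k) = F.card.choose (k + 1) * (k + 1) := h1.symm
        _ = F.card * (F.card - 1).choose k := h2.symm
        _ = (F.card - 1).choose k * F.card := Nat.mul_comm _ _
    have hcast : (k : ℝ) + ((F.card - k : ℕ) : ℝ) = (F.card : ℝ) := by
      have : k + (F.card - k) = F.card := by omega
      exact_mod_cast congrArg (fun x : ℕ => (x : ℝ)) this
    have hXpos : (0 : ℝ) < (F.card : ℝ) := by exact_mod_cast hX1
    rw [hcast]
    field_simp
    exact_mod_cast hnat.symm

lemma pointwise_count {Ω : Type*} {n : ℕ} (A : Fin n → Set Ω) (R T : Finset (Fin n))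
    (hT : T ⊆ Rᶜ) (t : ℕ) (hTcard : T.card = t) (ω : Ω) :
    ∑ j ∈ T, Set.indicator ((⋂ l ∈ R, A l) ∩ A j) (fun _ => (1 : ℝ)) ω
      ≤ ∑ s ∈ Icc 1 t, Set.indicator (Ev A R s) (fun _ => (1 : ℝ)) ω := by
  classical
  by_cases hB : ω ∈ ⋂ l ∈ R, A l
  · have hRS : ∀ l ∈ R, ω ∈ A l := by
      intro l hl
      simp only [Set.mem_iInter] at hB
      exact hB l hl
    set Y := (Rᶜ.filter (fun j => ω ∈ A j)).card with hYdef
    have hL : ∑ j ∈ T, Set.indicator ((⋂ l ∈ R, A l) ∩ A j) (fun _ => (1 : ℝ)) ω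
        = ((T.filter (fun j => ω ∈ A j)).card : ℝ) := by
      rw [← Finset.sum_boole]
      refine Finset.sum_congr rfl fun j hj => ?_
      rw [Set.indicator_apply]
      by_cases h : ω ∈ A j
      · rw [if_pos ⟨hB, h⟩, if_pos h]
      · rw [if_neg (fun hh => h hh.2), if_neg h]
    have hmem : ∀ s, ω ∈ Ev A R s ↔ s ≤ Y := by
      intro s
      simp only [Ev, Set.mem_setOf_eq, ← hYdef]
      exact ⟨fun h => h.2, fun h =>
        ⟨fun l hl => Finset.mem_filter.mpr ⟨Finset.mem_univ _, hRS l hl⟩, h⟩⟩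
    have hRHS : ∑ s ∈ Icc 1 t, Set.indicator (Ev A R s) (fun _ => (1 : ℝ)) ω
        = (((Icc 1 t).filter (fun s => s ≤ Y)).card : ℝ) := by
      rw [← Finset.sum_boole]
      refine Finset.sum_congr rfl fun s _ => ?_
      rw [Set.indicator_apply]
      by_cases h : ω ∈ Ev A R s
      · rw [if_pos h, if_pos ((hmem s).mp h)]
      · rw [if_neg h, if_neg (fun hh => h ((hmem s).mpr hh))]
    rw [hL, hRHS]
    have h1 : (T.filter (fun j => ω ∈ A j)).card ≤ min t Y := by
      refine le_min ?_ ?_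
      · rw [← hTcard]
        exact Finset.card_le_card (Finset.filter_subset _ _)
      · exact Finset.card_le_card fun j hj => Finset.mem_filter.mpr
          ⟨hT (Finset.mem_filter.mp hj).1, (Finset.mem_filter.mp hj).2⟩
    have h2 : ((Icc 1 t).filter (fun s => s ≤ Y)).card = min t Y := by
      have heq : (Icc 1 t).filter (fun s => s ≤ Y) = Icc 1 (min t Y) := by
        ext s
        simp only [Finset.mem_filter, mem_Icc]
        omega
      rw [heq, Nat.card_Icc]
      omega
    exact_mod_cast h1.trans_eq h2.symm
  · have h0 : ∑ j ∈ T, Set.indicator ((⋂ l ∈ R, A l) ∩ A j) (fun _ => (1 : ℝ)) ω = 0 :=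
      Finset.sum_eq_zero fun j _ => Set.indicator_of_notMem (fun h => hB h.1) _
    rw [h0]
    exact Finset.sum_nonneg fun s _ => Set.indicator_nonneg (fun _ _ => zero_le_one) _

/-- for `1 ≤ k ≤ n-1`, with `W_s(i_1,…,i_k)` the `s`-th largest of
the `n-k` values `P(A_{i_1} ∩ ⋯ ∩ A_{i_k} ∩ A_j)`, `j ∉ {i_1,…,i_k}`,
`E[C(X-1, k)] ≥ ∑_{i_1<⋯<i_k} ∑_{s=1}^{n-k} W_s(i_1,…,i_k) · k/((k+s)(k+s-1))`. -/
theorem expectation_choose_ge_weighted_order_statistics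
    {Ω : Type*} [MeasurableSpace Ω] (P : Measure Ω) [IsProbabilityMeasure P]
    (n k : ℕ) (hk : 1 ≤ k) (hkn : k + 1 ≤ n)
    (A : Fin n → Set Ω) (hA : ∀ l, MeasurableSet (A l)) :
    (∫ ω, ((((Finset.univ.filter (fun l => ω ∈ A l)).card - 1).choose k : ℕ) : ℝ) ∂P)
      ≥ ∑ R ∈ Finset.powersetCard k (Finset.univ : Finset (Fin n)),
          ∑ s ∈ Finset.Icc 1 (n - k),
            nthLargest ((Rᶜ : Finset (Fin n)).val.map
                (fun j => (P ((⋂ l ∈ R, A l) ∩ A j)).toReal)) s *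
              ((k : ℝ) / (((k : ℝ) + s) * ((k : ℝ) + s - 1))) := by
  classical
  have hm : ∀ (R : Finset (Fin n)) (s : ℕ), MeasurableSet (Ev A R s) :=
    fun R s => Ev_measurable A hA R s
  have hint1 : ∀ B : Set Ω, MeasurableSet B →
      (∫ ω, Set.indicator B (fun _ => (1 : ℝ)) ω ∂P) = (P B).toReal := by
    intro B hB
    rw [MeasureTheory.integral_indicator_const (1 : ℝ) hB, smul_eq_mul, mul_one]
    rfl
  have hIntg : ∀ B : Set Ω, MeasurableSet B →
      Integrable (fun ω => Set.indicator B (fun _ => (1 : ℝ)) ω) P :=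
    fun B hB => (integrable_const (1 : ℝ)).indicator hB
  have hmB : ∀ (R : Finset (Fin n)) (j : Fin n), MeasurableSet ((⋂ l ∈ R, A l) ∩ A j) :=
    fun R j => (MeasurableSet.biInter (Finset.countable_toSet _) fun l _ => hA l).inter (hA j)
  have step1 : (∫ ω, ((((Finset.univ.filter (fun l => ω ∈ A l)).card - 1).choose k : ℕ) : ℝ) ∂P)
      = ∑ R ∈ powersetCard k (Finset.univ : Finset (Fin n)), ∑ s ∈ Icc 1 (n - k),
          cw k s * (P (Ev A R s)).toReal := by
    have hfe : (fun ω => ((((Finset.univ.filter (fun l => ω ∈ A l)).card - 1).choose k : ℕ) : ℝ))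
        = fun ω => ∑ R ∈ powersetCard k (Finset.univ : Finset (Fin n)), ∑ s ∈ Icc 1 (n - k),
            cw k s * Set.indicator (Ev A R s) (fun _ => (1 : ℝ)) ω :=
      funext fun ω => pointwise_id n k hk A ω
    rw [hfe, integral_finset_sum _ (fun R _ =>
      integrable_finset_sum _ fun s _ => (hIntg _ (hm R s)).const_mul _)]
    refine Finset.sum_congr rfl fun R _ => ?_
    rw [integral_finset_sum _ (fun s _ => (hIntg _ (hm R s)).const_mul _)]
    refine Finset.sum_congr rfl fun s _ => ?_
    rw [integral_const_mul, hint1 _ (hm R s)]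
  rw [ge_iff_le, step1]
  refine Finset.sum_le_sum fun R hR => ?_
  rw [mem_powersetCard] at hR
  obtain ⟨-, hRk⟩ := hR
  have hcompl : Rᶜ.card = n - k := by
    rw [Finset.card_compl, hRk, Fintype.card_fin]
  have habel := abel_nonneg (n - k) (cw k)
    (fun s => (P (Ev A R s)).toReal
      - nthLargest (Rᶜ.val.map (fun j => (P ((⋂ l ∈ R, A l) ∩ A j)).toReal)) s)
    ?_ ?_ ?_
  · have expand : ∑ s ∈ Icc 1 (n - k), cw k s * ((P (Ev A R s)).toReal
        - nthLargest (Rᶜ.val.map (fun j => (P ((⋂ l ∈ R, A l) ∩ A j)).toReal)) s)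
        = ∑ s ∈ Icc 1 (n - k), cw k s * (P (Ev A R s)).toReal
          - ∑ s ∈ Icc 1 (n - k),
              nthLargest (Rᶜ.val.map (fun j => (P ((⋂ l ∈ R, A l) ∩ A j)).toReal)) s * cw k s := by
      rw [← Finset.sum_sub_distrib]
      exact Finset.sum_congr rfl fun s _ => by ring
    rw [expand, sub_nonneg] at habel
    exact habel
  · intro s hs
    rw [mem_Icc] at hs
    have h1 : (1 : ℝ) ≤ (k : ℝ) := by exact_mod_cast hk
    have hs1 : (1 : ℝ) ≤ (s : ℝ) := by exact_mod_cast hs.1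
    unfold cw
    apply div_nonneg (by linarith)
    nlinarith
  · intro s hs t ht hst
    rw [mem_Icc] at hs ht
    have h1 : (1 : ℝ) ≤ (k : ℝ) := by exact_mod_cast hk
    have hs1 : (1 : ℝ) ≤ (s : ℝ) := by exact_mod_cast hs.1
    have hst' : (s : ℝ) ≤ (t : ℝ) := by exact_mod_cast hst
    unfold cw
    apply div_le_div_of_nonneg_left (by linarith) (by nlinarith) (by nlinarith)
  · intro t ht
    rw [mem_Icc] at ht
    obtain ⟨T, hTsub, hTcard, hTsum⟩ := exists_subset_top_sum R
      (fun j => (P ((⋂ l ∈ R, A l) ∩ A j)).toReal) t (by omega)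
    rw [Finset.sum_sub_distrib, sub_nonneg, hTsum]
    calc ∑ j ∈ T, (P ((⋂ l ∈ R, A l) ∩ A j)).toReal
        = ∑ j ∈ T, ∫ ω, Set.indicator ((⋂ l ∈ R, A l) ∩ A j) (fun _ => (1 : ℝ)) ω ∂P :=
          Finset.sum_congr rfl fun j _ => (hint1 _ (hmB R j)).symm
      _ = ∫ ω, ∑ j ∈ T, Set.indicator ((⋂ l ∈ R, A l) ∩ A j) (fun _ => (1 : ℝ)) ω ∂P :=
          (integral_finset_sum _ fun j _ => hIntg _ (hmB R j)).symm
      _ ≤ ∫ ω, ∑ s ∈ Icc 1 t, Set.indicator (Ev A R s) (fun _ => (1 : ℝ)) ω ∂P :=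
          integral_mono (integrable_finset_sum _ fun j _ => hIntg _ (hmB R j))
            (integrable_finset_sum _ fun s _ => hIntg _ (hm R s))
            (fun ω => pointwise_count A R T hTsub t hTcard ω)
      _ = ∑ s ∈ Icc 1 t, (P (Ev A R s)).toReal := by
          rw [integral_finset_sum _ fun s _ => hIntg _ (hm R s)]
          exact Finset.sum_congr rfl fun s _ => hint1 _ (hm R s)
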